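/- arXiv:1907.02109 — 6 statements merged into one kernel-verified Lean document; each statement's English description precedes it below -/
import Mathlib

section
/- Let n ∈ ℕ, γ > 0, L > 0, and h : ℝⁿ → ℝ, and suppose that for every z ∈ [0,1]ⁿ the value f(z) = sup_{α ∈ ℝⁿ} ( h(α) − (γ/2) Σ_i z_i α_i² ) is finite and attained at some maximizer α*(z) with ‖α*(z)‖_∞ ≤ L. Then f is Lipschitz continuous on [0,1]ⁿ with respect to the ℓ₁ norm with constant (γ/2)·L²; that is, for all z, z' ∈ [0,1]ⁿ, |f(z) − f(z')| ≤ (γ/2) · L² · Σ_{i=1}^n |z_i − z'_i|. -/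
/-!
Fix `z, z'` in the box and a maximizer `α = α*(z)`. Since `α` is feasible for `z'`,
`f z - f z' ≤ (γ/2) ∑ (z'_i - z_i) α_i²`, and `α_i² ≤ L²` bounds this by
`(γ/2) L² ‖z - z'‖₁`. Exchanging `z` and `z'` gives the other half of the absolute value.
-/

namespace Ridge

variable {ι : Type*} [Fintype ι]

theorem sum_sub_mul_sq_le {z z' α : ι → ℝ} {L : ℝ} (hα : ∀ i, |α i| ≤ L) :
    ∑ i, (z' i - z i) * α i ^ 2 ≤ L ^ 2 * ∑ i, |z i - z' i| := by
  rw [Finset.mul_sum]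
  refine Finset.sum_le_sum fun i _ => ?_
  have hsq : α i ^ 2 ≤ L ^ 2 := sq_le_sq' (abs_le.mp (hα i)).1 (abs_le.mp (hα i)).2
  calc (z' i - z i) * α i ^ 2 ≤ |z i - z' i| * α i ^ 2 :=
        mul_le_mul_of_nonneg_right (abs_sub_comm (z i) (z' i) ▸ le_abs_self _) (sq_nonneg _)
    _ ≤ |z i - z' i| * L ^ 2 := mul_le_mul_of_nonneg_left hsq (abs_nonneg _)
    _ = L ^ 2 * |z i - z' i| := mul_comm _ _

theorem value_sub_le_of_maximizer {h : (ι → ℝ) → ℝ} {γ L fz fz' : ℝ} (hγ : 0 ≤ γ)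
    {z z' α : ι → ℝ} (hfz : fz = h α - (γ / 2) * ∑ i, z i * α i ^ 2)
    (hfz' : h α - (γ / 2) * ∑ i, z' i * α i ^ 2 ≤ fz') (hα : ∀ i, |α i| ≤ L) :
    fz - fz' ≤ (γ / 2) * L ^ 2 * ∑ i, |z i - z' i| := by
  calc fz - fz' ≤ (γ / 2) * ∑ i, (z' i - z i) * α i ^ 2 := by
        simp only [sub_mul, Finset.sum_sub_distrib]
        linarith
    _ ≤ (γ / 2) * (L ^ 2 * ∑ i, |z i - z' i|) :=
        mul_le_mul_of_nonneg_left (sum_sub_mul_sq_le hα) (by linarith)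
    _ = (γ / 2) * L ^ 2 * ∑ i, |z i - z' i| := (mul_assoc _ _ _).symm

end Ridge

theorem ridge_lipschitz_general (n : ℕ) (γ L : ℝ) (hγ : 0 < γ)
    (h : (Fin n → ℝ) → ℝ) (f : (Fin n → ℝ) → ℝ) (αstar : (Fin n → ℝ) → (Fin n → ℝ))
    (hub : ∀ z : Fin n → ℝ, (∀ i, 0 ≤ z i ∧ z i ≤ 1) →
      ∀ α : Fin n → ℝ, h α - (γ / 2) * ∑ i, z i * (α i) ^ 2 ≤ f z)
    (hatt : ∀ z : Fin n → ℝ, (∀ i, 0 ≤ z i ∧ z i ≤ 1) →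
      f z = h (αstar z) - (γ / 2) * ∑ i, z i * (αstar z i) ^ 2)
    (hbdd : ∀ z : Fin n → ℝ, (∀ i, 0 ≤ z i ∧ z i ≤ 1) → ∀ i, |αstar z i| ≤ L) :
    ∀ z z' : Fin n → ℝ, (∀ i, 0 ≤ z i ∧ z i ≤ 1) → (∀ i, 0 ≤ z' i ∧ z' i ≤ 1) →
      |f z - f z'| ≤ (γ / 2) * L ^ 2 * ∑ i, |z i - z' i| := by
  intro z z' hz hz'
  have hsymm : ∑ i, |z' i - z i| = ∑ i, |z i - z' i| :=
    Finset.sum_congr rfl fun i _ => abs_sub_comm _ _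
  rw [abs_sub_le_iff]
  constructor
  · exact Ridge.value_sub_le_of_maximizer hγ.le (hatt z hz) (hub z' hz' _) (hbdd z hz)
  · rw [← hsymm]
    exact Ridge.value_sub_le_of_maximizer hγ.le (hatt z' hz') (hub z hz _) (hbdd z' hz')

/-- Lipschitz continuity of the ridge regularized value function on the unit box,
with respect to the ℓ₁ norm, with constant `(γ/2) * L²`. -/
theorem ridge_lipschitz (n : ℕ) (γ L : ℝ) (hγ : 0 < γ) (hL : 0 < L)
    (h : (Fin n → ℝ) → ℝ) (f : (Fin n → ℝ) → ℝ) (αstar : (Fin n → ℝ) → (Fin n → ℝ))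
    (hub : ∀ z : Fin n → ℝ, (∀ i, 0 ≤ z i ∧ z i ≤ 1) →
      ∀ α : Fin n → ℝ, h α - (γ / 2) * ∑ i, z i * (α i) ^ 2 ≤ f z)
    (hatt : ∀ z : Fin n → ℝ, (∀ i, 0 ≤ z i ∧ z i ≤ 1) →
      f z = h (αstar z) - (γ / 2) * ∑ i, z i * (αstar z i) ^ 2)
    (hbdd : ∀ z : Fin n → ℝ, (∀ i, 0 ≤ z i ∧ z i ≤ 1) → ∀ i, |αstar z i| ≤ L) :
    ∀ z z' : Fin n → ℝ, (∀ i, 0 ≤ z i ∧ z i ≤ 1) → (∀ i, 0 ≤ z' i ∧ z' i ≤ 1) →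
      |f z - f z'| ≤ (γ / 2) * L ^ 2 * ∑ i, |z i - z' i| :=
  ridge_lipschitz_general n γ L hγ h f αstar hub hatt hbdd
end

section
/- Let n ∈ ℕ, M > 0, L > 0, h : ℝⁿ → ℝ, and let f(z) = sup_{α ∈ ℝⁿ} ( h(α) − M Σ_i z_i |α_i| ). Let z* ∈ [0,1]ⁿ, let R = { i : 0 < z*_i < 1 } be the set of fractional coordinates, and suppose |R| ≥ 1. Assume: (i) f(z*) is finite and f(z*) ≤ f(z) for every z ∈ {0,1}ⁿ; (ii) for every z ∈ {0,1}ⁿ, f(z) is finite and attained at a maximizer α*(z) with ‖α*(z)‖_∞ ≤ L. Let z be a random vector in {0,1}ⁿ with independent coordinates z_i distributed Bernoulli(z*_i). Then for every ε > 0, with probability at least 1 − |R| · exp( − ε² / (2 M² L² |R|²) ), the rounded vector z satisfies 0 ≤ f(z) − f(z*) ≤ ε. (Theorem 3.1 of the paper, big-M penalty case, with κ = 2 M² L² |R|².) -/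
/-!
Put `t = ε / (M L |R|)` and call a rounding `z` good if `z*ᵢ - zᵢ ≤ t` on `R` and `z*ᵢ - zᵢ ≤ 0`
off `R`. Testing the supremum defining `f z*` at the maximizer `α*(z)` gives
`f z - f z* ≤ M ∑ᵢ (z*ᵢ - zᵢ) |α*(z)ᵢ|`, which on a good rounding is at most `M L |R| t = ε`.
Coordinates off `R` are deterministic, and a fractional coordinate fails only if `z*ᵢ > t` and it
is rounded down, with probability `1 - z*ᵢ < 1 - t ≤ exp (-t²/2)`. The product of the success
probabilities is at least one minus the sum of the failure probabilities.
-/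

open MeasureTheory Finset Real

lemma bigM_gap_le {ι : Type*} [Fintype ι] (h : (ι → ℝ) → ℝ) {M L : ℝ}
    (hM : 0 ≤ M) {z z' α c : ι → ℝ} {a b : ℝ} (ha : a = h α - M * ∑ i, z i * |α i|)
    (hb : h α - M * ∑ i, z' i * |α i| ≤ b) (hc : ∀ i, z' i - z i ≤ c i) (hc0 : ∀ i, 0 ≤ c i)
    (hα : ∀ i, |α i| ≤ L) :
    a - b ≤ M * (L * ∑ i, c i) := by
  have hterm : ∀ i, (z' i - z i) * |α i| ≤ L * c i := fun i =>
    calc (z' i - z i) * |α i| ≤ c i * |α i| := mul_le_mul_of_nonneg_right (hc i) (abs_nonneg _)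
      _ ≤ c i * L := mul_le_mul_of_nonneg_left (hα i) (hc0 i)
      _ = L * c i := mul_comm _ _
  calc a - b ≤ M * ∑ i, (z' i - z i) * |α i| := by
        simp only [sub_mul, sum_sub_distrib]
        linarith
    _ ≤ M * (L * ∑ i, c i) :=
        mul_le_mul_of_nonneg_left ((sum_le_sum fun i _ => hterm i).trans_eq (mul_sum ..).symm) hM

lemma one_sub_sum_le_prod {ι : Type*} (s : Finset ι) {q : ι → ℝ}
    (hq : ∀ i ∈ s, 0 ≤ q i ∧ q i ≤ 1) :
    1 - ∑ i ∈ s, (1 - q i) ≤ ∏ i ∈ s, q i := by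
  classical
  induction s using Finset.cons_induction with
  | empty => simp
  | cons a s _ ih =>
    rw [prod_cons, sum_cons]
    obtain ⟨hqa₀, hqa₁⟩ := hq a (mem_cons_self a s)
    have hs : ∀ i ∈ s, 0 ≤ q i ∧ q i ≤ 1 := fun i hi => hq i (mem_cons_of_mem hi)
    have hsum : 0 ≤ ∑ i ∈ s, (1 - q i) := sum_nonneg fun i hi => by linarith [(hs i hi).2]
    have hprod : 0 ≤ ∏ i ∈ s, q i := prod_nonneg fun i hi => (hs i hi).1
    nlinarith [ih hs]

lemma one_sub_le_exp_neg_sq_div_two {t : ℝ} (ht : 0 ≤ t) : 1 - t ≤ exp (-(t ^ 2) / 2) := by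
  rcases le_or_gt t 2 with ht₂ | ht₂
  · exact (one_sub_le_exp_neg t).trans (exp_le_exp.2 (by nlinarith))
  · linarith [exp_pos (-(t ^ 2) / 2)]

/-- The probability that rounding `p` to a Bernoulli(`p`) bit lowers it by at most `c ≥ 0`. -/
noncomputable def roundingProb (p c : ℝ) : ℝ := if c < p then p else 1

section RoundingProb

variable {p c : ℝ}

lemma roundingProb_nonneg (hc : 0 ≤ c) : 0 ≤ roundingProb p c := by
  unfold roundingProb; split_ifs <;> linarith

lemma roundingProb_le_one (hp : p ≤ 1) : roundingProb p c ≤ 1 := by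
  unfold roundingProb; split_ifs <;> linarith

lemma one_sub_roundingProb_le_exp {t : ℝ} (ht : 0 ≤ t) :
    1 - roundingProb p t ≤ exp (-(t ^ 2) / 2) := by
  unfold roundingProb
  split_ifs with htp
  · linarith [one_sub_le_exp_neg_sq_div_two ht]
  · simpa using (exp_pos _).le

lemma roundingProb_zero_of_eq_zero_or_eq_one (hp : p = 0 ∨ p = 1) : roundingProb p 0 = 1 := by
  rcases hp with rfl | rfl <;> simp [roundingProb]

lemma bernoulli_toMeasure_sub_le (hp : p ≤ 1) (hc : 0 ≤ c) :
    (PMF.bernoulli p.toNNReal (toNNReal_le_one.2 hp)).toMeasure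
      {b : Bool | p - (if b then 1 else 0) ≤ c} = ENNReal.ofReal (roundingProb p c) := by
  unfold roundingProb
  split_ifs with hcp
  · have : {b : Bool | p - (if b then 1 else 0) ≤ c} = {true} := by
      ext b; cases b <;> simp <;> linarith
    rw [this, PMF.toMeasure_apply_singleton _ _ (measurableSet_singleton _), PMF.bernoulli_apply]
    rfl
  · have : {b : Bool | p - (if b then 1 else 0) ≤ c} = Set.univ := by
      ext b; cases b <;> simp <;> linarith
    rw [this, measure_univ, ENNReal.ofReal_one]

end RoundingProb

lemma measure_pi_bernoulli_sub_le {ι : Type*} [Fintype ι] {p c : ι → ℝ} (hp : ∀ i, p i ≤ 1)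
    (hc : ∀ i, 0 ≤ c i) :
    Measure.pi (fun i => (PMF.bernoulli (p i).toNNReal (toNNReal_le_one.2 (hp i))).toMeasure)
      {ω | ∀ i, p i - (if ω i then 1 else 0) ≤ c i} =
      ENNReal.ofReal (∏ i, roundingProb (p i) (c i)) := by
  have : {ω : ι → Bool | ∀ i, p i - (if ω i then 1 else 0) ≤ c i} =
      Set.univ.pi fun i => {b : Bool | p i - (if b then 1 else 0) ≤ c i} := by
    ext ω; simp
  rw [this, Measure.pi_pi, ENNReal.ofReal_prod_of_nonneg fun i _ => roundingProb_nonneg (hc i)]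
  exact prod_congr rfl fun i _ => bernoulli_toMeasure_sub_le (hp i) (hc i)

lemma one_sub_card_mul_exp_le_prod_roundingProb {ι : Type*} [Fintype ι] [DecidableEq ι]
    (R : Finset ι) {t : ℝ} (ht : 0 ≤ t) {p : ι → ℝ} (hp : ∀ i, p i ≤ 1)
    (hpR : ∀ i ∉ R, p i = 0 ∨ p i = 1) :
    1 - R.card * exp (-(t ^ 2) / 2) ≤ ∏ i, roundingProb (p i) (if i ∈ R then t else 0) := by
  have hfail : ∀ i, 1 - roundingProb (p i) (if i ∈ R then t else 0) ≤
      if i ∈ R then exp (-(t ^ 2) / 2) else 0 := by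
    intro i
    by_cases hi : i ∈ R
    · simpa only [hi, if_true] using one_sub_roundingProb_le_exp ht
    · simp [hi, roundingProb_zero_of_eq_zero_or_eq_one (hpR i hi)]
  calc 1 - R.card * exp (-(t ^ 2) / 2)
      = 1 - ∑ i, if i ∈ R then exp (-(t ^ 2) / 2) else 0 := by
        rw [sum_ite_mem, univ_inter, sum_const, nsmul_eq_mul]
    _ ≤ 1 - ∑ i, (1 - roundingProb (p i) (if i ∈ R then t else 0)) :=
        sub_le_sub_left (sum_le_sum fun i _ => hfail i) 1
    _ ≤ ∏ i, roundingProb (p i) (if i ∈ R then t else 0) :=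
        one_sub_sum_le_prod univ fun i _ =>
          ⟨roundingProb_nonneg (by split_ifs <;> simp [ht]), roundingProb_le_one (hp i)⟩

theorem bigM_randomized_rounding_general (n : ℕ) (M L : ℝ) (hM : 0 < M) (hL : 0 < L)
    (h : (Fin n → ℝ) → ℝ) (f : (Fin n → ℝ) → ℝ) (αstar : (Fin n → ℝ) → (Fin n → ℝ))
    (zstar : Fin n → ℝ) (hzstar : ∀ i, 0 ≤ zstar i ∧ zstar i ≤ 1)
    (R : Finset (Fin n)) (hR : R = Finset.univ.filter fun i => 0 < zstar i ∧ zstar i < 1)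
    -- `f zstar` is the supremum value at `zstar` :
    (hubstar : ∀ α : Fin n → ℝ, h α - M * ∑ i, zstar i * |α i| ≤ f zstar)
    -- `zstar` is a relaxation lower bound: `f zstar ≤ f z` for every binary `z` :
    (hmin : ∀ z : Fin n → ℝ, (∀ i, z i = 0 ∨ z i = 1) → f zstar ≤ f z)
    -- at every binary `z`, `f z` is the supremum value, attained at `αstar z` :
    (hatt : ∀ z : Fin n → ℝ, (∀ i, z i = 0 ∨ z i = 1) →
      f z = h (αstar z) - M * ∑ i, z i * |αstar z i|)
    (hbdd : ∀ z : Fin n → ℝ, (∀ i, z i = 0 ∨ z i = 1) → ∀ i, |αstar z i| ≤ L)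
    -- `μ` is the product Bernoulli(zstar i) measure on `{0,1}ⁿ` :
    (μ : MeasureTheory.Measure (Fin n → Bool))
    (hμ : μ = MeasureTheory.Measure.pi fun i =>
      (PMF.bernoulli (Real.toNNReal (zstar i))
        (Real.toNNReal_le_one.mpr (hzstar i).2)).toMeasure)
    (ε : ℝ) (hε : 0 < ε) :
    ENNReal.ofReal
        (1 - R.card * Real.exp (-(ε ^ 2) / (2 * M ^ 2 * L ^ 2 * (R.card : ℝ) ^ 2))) ≤
      μ {ω | 0 ≤ f (fun i => if ω i then 1 else 0) - f zstar ∧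
             f (fun i => if ω i then 1 else 0) - f zstar ≤ ε} := by
  set t := ε / (M * L * R.card) with ht
  have ht0 : 0 ≤ t := by positivity
  set c : Fin n → ℝ := fun i => if i ∈ R then t else 0
  have hc0 : ∀ i, 0 ≤ c i := fun i => by dsimp only [c]; split_ifs <;> simp [ht0]
  have hεc : M * (L * ∑ i, c i) ≤ ε := by
    have hsum : M * (L * ∑ i, c i) = M * L * R.card * t := by
      rw [sum_ite_mem, univ_inter, sum_const, nsmul_eq_mul]; ring
    by_cases hR0 : (R.card : ℝ) = 0
    · simp [hsum, hR0, hε.le]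
    · rw [hsum, ht, mul_div_cancel₀ _ (mul_ne_zero (mul_ne_zero hM.ne' hL.ne') hR0)]
  have hgood : {ω : Fin n → Bool | ∀ i, zstar i - (if ω i then 1 else 0) ≤ c i} ⊆
      {ω | 0 ≤ f (fun i => if ω i then 1 else 0) - f zstar ∧
             f (fun i => if ω i then 1 else 0) - f zstar ≤ ε} := by
    intro ω hω
    set z : Fin n → ℝ := fun i => if ω i then 1 else 0
    have hz : ∀ i, z i = 0 ∨ z i = 1 := fun i => by by_cases hi : ω i <;> simp [z, hi]
    exact ⟨sub_nonneg.2 (hmin z hz), (bigM_gap_le h hM.le (hatt z hz)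
      (hubstar (αstar z)) hω hc0 (hbdd z hz)).trans hεc⟩
  have hpR : ∀ i ∉ R, zstar i = 0 ∨ zstar i = 1 := fun i hi => by
    have hi' : zstar i ∈ Set.Icc 0 1 \ Set.Ioo 0 1 := ⟨hzstar i, by simpa [hR] using hi⟩
    simpa [Set.Icc_diff_Ioo_same zero_le_one] using hi'
  have hexp : -(ε ^ 2) / (2 * M ^ 2 * L ^ 2 * (R.card : ℝ) ^ 2) = -(t ^ 2) / 2 := by
    rw [ht]; ring
  calc ENNReal.ofReal (1 - R.card * exp (-(ε ^ 2) / (2 * M ^ 2 * L ^ 2 * (R.card : ℝ) ^ 2)))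
      ≤ ENNReal.ofReal (∏ i, roundingProb (zstar i) (c i)) := 
        ENNReal.ofReal_le_ofReal <| hexp ▸
          one_sub_card_mul_exp_le_prod_roundingProb R ht0 (fun i => (hzstar i).2) hpR
    _ = μ {ω | ∀ i, zstar i - (if ω i then 1 else 0) ≤ c i} :=
        (hμ ▸ measure_pi_bernoulli_sub_le (fun i => (hzstar i).2) hc0).symm
    _ ≤ _ := measure_mono hgood

/-- Theorem 3.1 (big-M case): randomized rounding of a relaxation minimizer `zstar`
gives, with probability at least `1 - |R| exp(-ε²/(2M²L²|R|²))`, a binary vector `z`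
with `0 ≤ f(z) - f(zstar) ≤ ε`. -/
theorem bigM_randomized_rounding (n : ℕ) (M L : ℝ) (hM : 0 < M) (hL : 0 < L)
    (h : (Fin n → ℝ) → ℝ) (f : (Fin n → ℝ) → ℝ) (αstar : (Fin n → ℝ) → (Fin n → ℝ))
    (zstar : Fin n → ℝ) (hzstar : ∀ i, 0 ≤ zstar i ∧ zstar i ≤ 1)
    (R : Finset (Fin n)) (hR : R = Finset.univ.filter fun i => 0 < zstar i ∧ zstar i < 1)
    (hRcard : 1 ≤ R.card)
    -- `f zstar` is the supremum value at `zstar` :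
    (hubstar : ∀ α : Fin n → ℝ, h α - M * ∑ i, zstar i * |α i| ≤ f zstar)
    -- `zstar` is a relaxation lower bound: `f zstar ≤ f z` for every binary `z` :
    (hmin : ∀ z : Fin n → ℝ, (∀ i, z i = 0 ∨ z i = 1) → f zstar ≤ f z)
    -- at every binary `z`, `f z` is the supremum value, attained at `αstar z` :
    (hub : ∀ z : Fin n → ℝ, (∀ i, z i = 0 ∨ z i = 1) →
      ∀ α : Fin n → ℝ, h α - M * ∑ i, z i * |α i| ≤ f z)
    (hatt : ∀ z : Fin n → ℝ, (∀ i, z i = 0 ∨ z i = 1) →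
      f z = h (αstar z) - M * ∑ i, z i * |αstar z i|)
    (hbdd : ∀ z : Fin n → ℝ, (∀ i, z i = 0 ∨ z i = 1) → ∀ i, |αstar z i| ≤ L)
    -- `μ` is the product Bernoulli(zstar i) measure on `{0,1}ⁿ` :
    (μ : MeasureTheory.Measure (Fin n → Bool))
    (hμ : μ = MeasureTheory.Measure.pi fun i =>
      (PMF.bernoulli (Real.toNNReal (zstar i))
        (Real.toNNReal_le_one.mpr (hzstar i).2)).toMeasure)
    (ε : ℝ) (hε : 0 < ε) :
    ENNReal.ofReal
        (1 - R.card * Real.exp (-(ε ^ 2) / (2 * M ^ 2 * L ^ 2 * (R.card : ℝ) ^ 2))) ≤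
      μ {ω | 0 ≤ f (fun i => if ω i then 1 else 0) - f zstar ∧
             f (fun i => if ω i then 1 else 0) - f zstar ≤ ε} :=
  bigM_randomized_rounding_general n M L hM hL h f αstar zstar hzstar R hR hubstar hmin hatt hbdd μ
    hμ ε hε
end

section
/- Let n ∈ ℕ, γ > 0, let g : ℝⁿ → ℝ ∪ {+∞}, and define h : ℝⁿ → ℝ ∪ {±∞} by h(α) = inf_{v ∈ ℝⁿ} ( g(v) − ⟨v, α⟩ ). Fix z ∈ [0,1]ⁿ. Then, in the extended reals, sup_{α ∈ ℝⁿ} ( h(α) − (γ/2) Σ_{i=1}^n z_i α_i² ) ≤ inf { g(x) + (1/(2γ)) Σ_{i : z_i > 0} x_i² / z_i : x ∈ ℝⁿ and x_i = 0 for every i with z_i = 0 }. (This is the weak-duality direction of the perspective reformulation of Theorem 3.2, valid also for fractional z.) -/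
open scoped BigOperators

/-! Each term of the supremum is bounded by each term of the infimum: taking `v = x` in the
infimum defining `h α` leaves the inequality `-x α - (γ/2) z α² ≤ x² / (2 γ z)` in every
coordinate, which is Fenchel–Young for the perspective of `x ↦ x² / (2γ)`, with slack
`(x + γ z α)² / (2 γ z)`. -/

theorem neg_mul_le_perspective {γ c : ℝ} (hγ : 0 < γ) (hc : 0 ≤ c) {x : ℝ}
    (hx : c = 0 → x = 0) (a : ℝ) :
    -(x * a) ≤ 1 / (2 * γ) * (if 0 < c then x ^ 2 / c else 0) + γ / 2 * (c * a ^ 2) := by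
  rcases hc.lt_or_eq with hc | rfl
  · have gap : 1 / (2 * γ) * (x ^ 2 / c) + γ / 2 * (c * a ^ 2) + x * a
        = (x + γ * c * a) ^ 2 / (2 * γ * c) := by
      field_simp
      ring
    rw [if_pos hc]
    linarith [show 0 ≤ (x + γ * c * a) ^ 2 / (2 * γ * c) by positivity]
  · simp [hx rfl]

theorem neg_inner_sub_le_perspective_sum {n : ℕ} {γ : ℝ} (hγ : 0 < γ) {z : Fin n → ℝ}
    (hz : ∀ i, 0 ≤ z i) {x : Fin n → ℝ} (hx : ∀ i, z i = 0 → x i = 0) (α : Fin n → ℝ) :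
    -(∑ i, x i * α i) - γ / 2 * ∑ i, z i * α i ^ 2 ≤
      1 / (2 * γ) * ∑ i ∈ Finset.univ.filter (fun i => 0 < z i), x i ^ 2 / z i := by
  have termwise := Finset.sum_le_sum fun i (_ : i ∈ Finset.univ) =>
    neg_mul_le_perspective hγ (hz i) (hx i) (α i)
  rw [Finset.sum_neg_distrib, Finset.sum_add_distrib, ← Finset.mul_sum, ← Finset.mul_sum,
    ← Finset.sum_filter] at termwise
  linarith

theorem EReal.sub_coe_sub_coe_le_add_coe {e : EReal} {a b d : ℝ} (h : -a - b ≤ d) :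
    e - a - b ≤ e + d := by
  have hsplit : e - a - b = e + ((-a - b : ℝ) : EReal) := by
    rw [sub_eq_add_neg, sub_eq_add_neg, add_assoc, sub_eq_add_neg, EReal.coe_add, EReal.coe_neg,
      EReal.coe_neg]
  rw [hsplit]
  gcongr

theorem perspective_weak_duality_general (n : ℕ) (γ : ℝ) (hγ : 0 < γ)
    (g : (Fin n → ℝ) → EReal)
    (h : (Fin n → ℝ) → EReal)
    (hh : ∀ α : Fin n → ℝ, h α = ⨅ v : Fin n → ℝ, g v - ((∑ i, v i * α i : ℝ) : EReal))
    (z : Fin n → ℝ) (hz : ∀ i, 0 ≤ z i ∧ z i ≤ 1) :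
    (⨆ α : Fin n → ℝ, h α - (((γ / 2) * ∑ i, z i * (α i) ^ 2 : ℝ) : EReal)) ≤
      ⨅ x : {x : Fin n → ℝ // ∀ i, z i = 0 → x i = 0},
        g x.1 + (((1 / (2 * γ)) *
          ∑ i ∈ Finset.univ.filter (fun i => 0 < z i), (x.1 i) ^ 2 / z i : ℝ) : EReal) := by
  refine le_iInf fun x => iSup_le fun α => ?_
  have h_le : h α ≤ g x.1 - ((∑ i, x.1 i * α i : ℝ) : EReal) := hh α ▸ iInf_le _ x.1
  calc h α - (((γ / 2) * ∑ i, z i * (α i) ^ 2 : ℝ) : EReal)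
      ≤ g x.1 - ((∑ i, x.1 i * α i : ℝ) : EReal)
          - (((γ / 2) * ∑ i, z i * (α i) ^ 2 : ℝ) : EReal) := EReal.sub_le_sub h_le le_rfl
    _ ≤ _ := EReal.sub_coe_sub_coe_le_add_coe <|
        neg_inner_sub_le_perspective_sum hγ (fun i => (hz i).1) x.2 α

/-- Weak duality for the perspective reformulation (Theorem 3.2), valid for
fractional `z ∈ [0,1]ⁿ`. -/
theorem perspective_weak_duality (n : ℕ) (γ : ℝ) (hγ : 0 < γ)
    (g : (Fin n → ℝ) → EReal) (hg : ∀ v, g v ≠ ⊥)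
    (h : (Fin n → ℝ) → EReal)
    (hh : ∀ α : Fin n → ℝ, h α = ⨅ v : Fin n → ℝ, g v - ((∑ i, v i * α i : ℝ) : EReal))
    (z : Fin n → ℝ) (hz : ∀ i, 0 ≤ z i ∧ z i ≤ 1) :
    (⨆ α : Fin n → ℝ, h α - (((γ / 2) * ∑ i, z i * (α i) ^ 2 : ℝ) : EReal)) ≤
      ⨅ x : {x : Fin n → ℝ // ∀ i, z i = 0 → x i = 0},
        g x.1 + (((1 / (2 * γ)) *
          ∑ i ∈ Finset.univ.filter (fun i => 0 < z i), (x.1 i) ^ 2 / z i : ℝ) : EReal) :=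
  perspective_weak_duality_general n γ hγ g h hh z hz
end

section
/- Let n ∈ ℕ, μ > 0, and let h : ℝⁿ → ℝ be μ-strongly concave with a global maximizer α* (so h(α*) ≥ h(α) for all α). Let Ω* : ℝ → ℝ satisfy Ω*(β) ≥ 0 for all β and Ω*(0) = 0, let z ∈ ℝⁿ with z_i ≥ 0 for all i, and let α*(z) ∈ ℝⁿ be a maximizer of the function α ↦ h(α) − Σ_{i=1}^n z_i Ω*(α_i). Then ‖α*(z)‖₂² ≤ 8 ( h(α*) − h(0) ) / μ; equivalently ‖α*(z)‖_∞ ≤ ‖α*(z)‖₂ ≤ L with L = 2 sqrt( 2 ( h(α*) − h(0) ) / μ ). (Lemma B.1 of the paper.) -/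
open scoped BigOperators

/-- Lemma B.1: for a μ-strongly concave `h` with global maximizer `αstar`, any maximizer
`αz` of `α ↦ h α - ∑ i, z i * Ωstar (α i)` (with `z ≥ 0`, `Ωstar ≥ 0`, `Ωstar 0 = 0`)
satisfies `‖αz‖₂² ≤ 8 (h(αstar) - h(0)) / μ`, hence
`‖αz‖_∞ ≤ ‖αz‖₂ ≤ L` with `L = 2 √(2 (h(αstar) - h(0)) / μ)`. -/
theorem strongly_concave_maximizer_bound (n : ℕ) (μ : ℝ) (hμ : 0 < μ)
    (h : (Fin n → ℝ) → ℝ)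
    (hconc : ∀ α β : Fin n → ℝ, ∀ t : ℝ, 0 ≤ t → t ≤ 1 →
      t * h α + (1 - t) * h β + (μ / 2) * t * (1 - t) * ∑ i, (α i - β i) ^ 2 ≤
        h (fun i => t * α i + (1 - t) * β i))
    (αstar : Fin n → ℝ) (hαstar : ∀ α, h α ≤ h αstar)
    (Ωstar : ℝ → ℝ) (hΩ0 : Ωstar 0 = 0) (hΩnn : ∀ β : ℝ, 0 ≤ Ωstar β)
    (z : Fin n → ℝ) (hz : ∀ i, 0 ≤ z i)
    (αz : Fin n → ℝ)
    (hαz : ∀ α : Fin n → ℝ,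
      h α - ∑ i, z i * Ωstar (α i) ≤ h αz - ∑ i, z i * Ωstar (αz i)) :
    (∑ i, (αz i) ^ 2 ≤ 8 * (h αstar - h 0) / μ) ∧
    (Real.sqrt (∑ i, (αz i) ^ 2) ≤ 2 * Real.sqrt (2 * (h αstar - h 0) / μ)) ∧
    (∀ i, |αz i| ≤ 2 * Real.sqrt (2 * (h αstar - h 0) / μ)) := by
  set S := ∑ i, (αz i) ^ 2 with hS
  have hSnn : 0 ≤ S := Finset.sum_nonneg fun i _ => sq_nonneg _
  -- h 0 ≤ h αz
  have h0z : h (0 : Fin n → ℝ) ≤ h αz := by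
    have := hαz 0
    simp only [Pi.zero_apply, hΩ0, mul_zero, Finset.sum_const_zero, sub_zero] at this
    have hnn : 0 ≤ ∑ i, z i * Ωstar (αz i) :=
      Finset.sum_nonneg fun i _ => mul_nonneg (hz i) (hΩnn _)
    linarith
  -- strong concavity at t = 1/2 with β = 0
  have hc := hconc αz 0 (1/2) (by norm_num) (by norm_num)
  simp only [Pi.zero_apply, sub_zero] at hc
  have hmid : h (fun i => (1/2 : ℝ) * αz i + (1 - 1/2) * (0:ℝ)) ≤ h αstar := hαstar _
  have key : μ / 8 * S ≤ h αstar - h 0 := by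
    have : (1/2 : ℝ) * h αz + (1 - 1/2) * h 0 + μ / 2 * (1/2) * (1 - 1/2) * S ≤ h αstar := by
      calc (1/2 : ℝ) * h αz + (1 - 1/2) * h 0 + μ / 2 * (1/2) * (1 - 1/2) * S ≤ _ := hc
        _ ≤ h αstar := hmid
    nlinarith
  have hDnn : 0 ≤ h αstar - h 0 := by linarith [hαstar 0]
  have h1 : S ≤ 8 * (h αstar - h 0) / μ := by
    rw [le_div_iff₀ hμ]; nlinarith
  refine ⟨h1, ?_, ?_⟩
  · have heq : 2 * Real.sqrt (2 * (h αstar - h 0) / μ) = Real.sqrt (8 * (h αstar - h 0) / μ) := by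
      rw [show (8 : ℝ) * (h αstar - h 0) / μ = 2^2 * (2 * (h αstar - h 0) / μ) by ring,
        Real.sqrt_mul (by positivity), Real.sqrt_sq (by norm_num)]
    rw [heq]
    exact Real.sqrt_le_sqrt h1
  · intro i
    have hi : (αz i) ^ 2 ≤ S := Finset.single_le_sum (fun j _ => sq_nonneg (αz j)) (Finset.mem_univ i)
    have : |αz i| ≤ Real.sqrt S := by
      rw [← Real.sqrt_sq_eq_abs]
      exact Real.sqrt_le_sqrt hi
    calc |αz i| ≤ Real.sqrt S := this
      _ ≤ 2 * Real.sqrt (2 * (h αstar - h 0) / μ) := by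
          rw [show 2 * Real.sqrt (2 * (h αstar - h 0) / μ) = Real.sqrt (8 * (h αstar - h 0) / μ) by
            rw [show (8 : ℝ) * (h αstar - h 0) / μ = 2^2 * (2 * (h αstar - h 0) / μ) by ring,
              Real.sqrt_mul (by positivity), Real.sqrt_sq (by norm_num)]]
          exact Real.sqrt_le_sqrt h1
end

section
/- Let y ∈ {−1, 1} and α ∈ ℝ. Then, in the extended reals, sup_{u ∈ ℝ} ( α u − max(1 − y u, 0) ) equals α y if −1 ≤ α y ≤ 0, and equals +∞ otherwise. (Fenchel conjugate of the hinge (SVM) loss from Table 1 of the paper.) -/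
open scoped BigOperators

/-- Fenchel conjugate of the hinge (SVM) loss (Table 1): for `y ∈ {-1, 1}`,
`sup_u (α u - max(1 - y u, 0))` equals `α y` if `-1 ≤ α y ≤ 0`, and `+∞` otherwise. -/
theorem hinge_loss_fenchel_conjugate (y α : ℝ) (hy : y = -1 ∨ y = 1) :
    (⨆ u : ℝ, ((α * u - max (1 - y * u) 0 : ℝ) : EReal)) =
      if -1 ≤ α * y ∧ α * y ≤ 0 then ((α * y : ℝ) : EReal) else ⊤ := by
  have hy2 : y * y = 1 := by rcases hy with h | h <;> simp [h]
  split_ifs with h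
  · obtain ⟨h1, h2⟩ := h
    apply le_antisymm
    · apply iSup_le
      intro u
      rw [EReal.coe_le_coe_iff]
      have hau : (α * y) * (y * u) = α * u := by
        rw [mul_assoc, ← mul_assoc y y u, hy2, one_mul]
      rcases le_total (1 - y * u) 0 with hm | hm
      · rw [max_eq_right hm]
        nlinarith
      · rw [max_eq_left hm]
        nlinarith
    · have := le_iSup (fun u : ℝ => ((α * u - max (1 - y * u) 0 : ℝ) : EReal)) y
      simpa [hy2] using this
  · rw [iSup_eq_top]
    intro b hb
    induction b using EReal.rec with
    | bot => exact ⟨0, by simp; exact EReal.bot_lt_coe _⟩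
    | top => exact absurd hb (lt_irrefl _)
    | coe r =>
      push_neg at h
      rcases lt_or_ge (α * y) 0 with hβ | hβ
      · have hβ' : α * y < -1 := by
          by_contra hc
          push_neg at hc
          exact absurd (h hc) (not_lt.mpr hβ.le)
        -- take t = min ((r+2)/(α*y+1)) 0, u = y * t
        set β := α * y with hβdef
        have hb1 : β + 1 < 0 := by linarith
        set t := min ((r + 2) / (β + 1)) 0 with ht
        refine ⟨y * t, ?_⟩
        rw [EReal.coe_lt_coe_iff]
        have hyu : y * (y * t) = t := by rw [← mul_assoc, hy2, one_mul]
        have hat : α * (y * t) = β * t := by rw [← mul_assoc]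
        have ht0 : t ≤ 0 := min_le_right _ _
        have htle : t ≤ (r + 2) / (β + 1) := min_le_left _ _
        have hid : (β + 1) * ((r + 2) / (β + 1)) = r + 2 := by
          rw [mul_div_assoc', mul_comm, mul_div_assoc, div_self (ne_of_lt hb1), mul_one]
        have hmul : (β + 1) * t ≥ r + 2 := by
          have := mul_le_mul_of_nonpos_left htle hb1.le
          linarith
        rw [hat, hyu, max_eq_left (by linarith)]
        nlinarith
      · have hβ' : 0 < α * y := by
          rcases lt_or_eq_of_le hβ with h' | h'
          · exact h'
          · exact absurd (h (by linarith)) (by simp [← h'])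
        set β := α * y with hβdef
        set t := max ((r + 1) / β) 1 with ht
        refine ⟨y * t, ?_⟩
        rw [EReal.coe_lt_coe_iff]
        have hyu : y * (y * t) = t := by rw [← mul_assoc, hy2, one_mul]
        have hat : α * (y * t) = β * t := by rw [← mul_assoc]
        have ht1 : 1 ≤ t := le_max_right _ _
        have htge : (r + 1) / β ≤ t := le_max_left _ _
        have hmul : r + 1 ≤ β * t := by
          rw [div_le_iff₀ hβ'] at htge
          linarith [htge]
        rw [hat, hyu, max_eq_right (by linarith)]
        linarith
end

section
/- Let n, k ∈ ℕ with k ≥ 1. For each i ∈ {1, …, k}, let Q_i be a real symmetric positive semidefinite n × n matrix, h_i ∈ ℝⁿ, g_i ∈ ℝ, and define the ellipsoidal set Q̂_i = { x ∈ ℝⁿ : xᵀ Q_i x + h_iᵀ x + g_i ≤ 0 }; also let A_i be a real m_i × n matrix, b_i ∈ ℝ^{m_i}, and define the polyhedron P_i = { x ∈ ℝⁿ : A_i x ≤ b_i }. Then, for any x ∈ ℝⁿ, x ∈ ⋃_{i=1}^k ( Q̂_i ∩ P_i ) if and only if there exist vectors x_1, …, x_k ∈ ℝⁿ, binary scalars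 δ_1, …, δ_k ∈ {0,1}, vectors ξ_i ∈ ℝ^{m_i}, and scalars ρ_i ∈ ℝ such that: x = Σ_{i=1}^k x_i; Σ_{i=1}^k δ_i = 1; A_i x_i ≤ b_i + ξ_i for all i; x_iᵀ Q_i x_i + h_iᵀ x_i + g_i ≤ ρ_i for all i; x_i = 0 whenever δ_i = 0; ξ_i = 0 whenever δ_i = 1; and ρ_i = 0 whenever δ_i = 1. (Correctness of the mixed-integer formulation with logical constraints of a union of ellipsoidal and polyhedral sets, Section 2.1.8 of the paper.) -/
open scoped BigOperators
open Matrix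

/-- Correctness of the mixed-integer formulation with logical constraints of a union of
ellipsoidal/polyhedral sets (Section 2.1.8): `x ∈ ⋃ᵢ (Q̂ᵢ ∩ Pᵢ)` iff the disjunctive
formulation with indicator variables `δ`, slack variables `ξ, ρ`, and logical
constraints is feasible. -/
theorem union_of_ellipsoids_formulation (n k : ℕ) (hk : 1 ≤ k)
    (m : Fin k → ℕ)
    (Q : Fin k → Matrix (Fin n) (Fin n) ℝ)
    (hQsymm : ∀ i, (Q i).IsSymm) (hQpsd : ∀ i, (Q i).PosSemidef)
    (hvec : Fin k → (Fin n → ℝ)) (gconst : Fin k → ℝ)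
    (A : (i : Fin k) → Matrix (Fin (m i)) (Fin n) ℝ)
    (b : (i : Fin k) → Fin (m i) → ℝ)
    (x : Fin n → ℝ) :
    (∃ i : Fin k,
        (x ⬝ᵥ (Q i).mulVec x + hvec i ⬝ᵥ x + gconst i ≤ 0) ∧
        (∀ j, ((A i).mulVec x) j ≤ b i j)) ↔
    (∃ (xs : Fin k → (Fin n → ℝ)) (δ : Fin k → ℝ)
        (ξ : (i : Fin k) → Fin (m i) → ℝ) (ρ : Fin k → ℝ),
      (∀ i, δ i = 0 ∨ δ i = 1) ∧
      x = ∑ i, xs i ∧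
      (∑ i, δ i) = 1 ∧
      (∀ i, ∀ j, ((A i).mulVec (xs i)) j ≤ b i j + ξ i j) ∧
      (∀ i, xs i ⬝ᵥ (Q i).mulVec (xs i) + hvec i ⬝ᵥ xs i + gconst i ≤ ρ i) ∧
      (∀ i, δ i = 0 → xs i = 0) ∧
      (∀ i, δ i = 1 → ξ i = 0) ∧
      (∀ i, δ i = 1 → ρ i = 0)) := by
  constructor
  · rintro ⟨i₀, hq, hp⟩
    refine ⟨fun i => if i = i₀ then x else 0,
      fun i => if i = i₀ then 1 else 0,
      fun i j => if i = i₀ then 0 else -(b i j),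
      fun i => if i = i₀ then 0 else gconst i, ?_, ?_, ?_, ?_, ?_, ?_, ?_, ?_⟩
    · intro i; by_cases h : i = i₀ <;> simp [h]
    · simp [Finset.sum_ite_eq']
    · simp
    · intro i j
      by_cases h : i = i₀
      · subst h; simpa using hp j
      · simp [h, Matrix.mulVec_zero]
    · intro i
      by_cases h : i = i₀
      · subst h; simpa using hq
      · simp [h, Matrix.mulVec_zero]
    · intro i hi
      by_cases h : i = i₀ <;> simp_all
    · intro i hi
      by_cases h : i = i₀ <;> [skip; simp_all]
      subst h; funext j; simp
    · intro i hi
      by_cases h : i = i₀ <;> simp_all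
  · rintro ⟨xs, δ, ξ, ρ, hbin, hx, hsum, hA, hQ, h0, hξ, hρ⟩
    -- find the index with δ i = 1
    have hex : ∃ i, δ i = 1 := by
      by_contra hc
      push_neg at hc
      have : ∀ i ∈ Finset.univ, δ i = 0 := fun i _ => (hbin i).resolve_right (hc i)
      rw [Finset.sum_congr rfl this] at hsum
      simp at hsum
    obtain ⟨i₀, hi₀⟩ := hex
    have hother : ∀ i, i ≠ i₀ → δ i = 0 := by
      intro i hne
      rcases hbin i with h | h
      · exact h
      · exfalso
        have hnn : ∀ j ∈ Finset.univ, 0 ≤ δ j := by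
          intro j _; rcases hbin j with h' | h' <;> simp [h']
        have h2 : (2 : ℝ) ≤ ∑ j, δ j := by
          have : δ i + δ i₀ ≤ ∑ j, δ j := by
            have := Finset.add_sum_erase Finset.univ δ (Finset.mem_univ i)
            rw [← this]
            have := Finset.add_sum_erase (Finset.univ.erase i) δ
              (Finset.mem_erase.mpr ⟨(Ne.symm hne), Finset.mem_univ i₀⟩)
            rw [← this, ← add_assoc]
            have : 0 ≤ ∑ j ∈ (Finset.univ.erase i).erase i₀, δ j :=
              Finset.sum_nonneg (fun j _ => hnn j (Finset.mem_univ j))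
            linarith
          rw [h, hi₀] at this; linarith
        rw [hsum] at h2; linarith
    have hxs0 : ∀ i, i ≠ i₀ → xs i = 0 := fun i hne => h0 i (hother i hne)
    have hxeq : x = xs i₀ := by
      rw [hx]
      rw [Finset.sum_eq_single i₀ (fun i _ hne => hxs0 i hne) (by simp)]
    refine ⟨i₀, ?_, ?_⟩
    · have := hQ i₀
      rw [hρ i₀ hi₀] at this
      rw [hxeq]; exact this
    · intro j
      have := hA i₀ j
      rw [hξ i₀ hi₀] at this
      simpa [hxeq] using this
end
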